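/- The derived subgroup K′ = [K,K] contains Xⁿ*[K,G] for all n ≥ 5. -/

import Mathlib

open Equiv

/-! ## The binary rooted tree and the twisted twin of the Grigorchuk group

We identify the vertex set of the infinite rooted binary tree with `V = List Bool`
(the free monoid `X*` on `X = {0,1}`), and realize automorphisms of the tree as
permutations of `V`.  The generators `a, b, c, d` of the twisted twin `G` of the
Grigorchuk group are defined by the recursive rules
`a(xw) = (¬x)w`, `ψ(b) = (c,a)`, `ψ(c) = (a,d)`, `ψ(d) = (1,b)`. -/

abbrev V : Type := List Bool

def actA : V → V
  | [] => []
  | x :: w => (!x) :: w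

theorem actA_invol : Function.Involutive actA := fun w => by
  cases w with
  | nil => rfl
  | cons x w => simp [actA]

mutual
  def actB : V → V
    | [] => []
    | false :: w => false :: actC w
    | true :: w => true :: actA w
  def actC : V → V
    | [] => []
    | false :: w => false :: actA w
    | true :: w => true :: actD w
  def actD : V → V
    | [] => []
    | false :: w => false :: w
    | true :: w => true :: actB w
end

theorem act_invol3 (w : V) :
    actB (actB w) = w ∧ actC (actC w) = w ∧ actD (actD w) = w := by
  induction w with
  | nil => exact ⟨rfl, rfl, rfl⟩
  | cons x w ih =>
    cases x <;>
      exact ⟨by simp [actB, actC, actD, ih.1, ih.2.1, ih.2.2, actA_invol w],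
        by simp [actB, actC, actD, ih.1, ih.2.1, ih.2.2, actA_invol w],
        by simp [actB, actC, actD, ih.1, ih.2.1, ih.2.2, actA_invol w]⟩

theorem actB_invol : Function.Involutive actB := fun w => (act_invol3 w).1
theorem actC_invol : Function.Involutive actC := fun w => (act_invol3 w).2.1
theorem actD_invol : Function.Involutive actD := fun w => (act_invol3 w).2.2

/-- The generator `a`: the root swap. -/
def a : Perm V := actA_invol.toPerm actA
/-- The generator `b`, with `ψ(b) = (c, a)`. -/
def b : Perm V := actB_invol.toPerm actB
/-- The generator `c`, with `ψ(c) = (a, d)`. -/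
def c : Perm V := actC_invol.toPerm actC
/-- The generator `d`, with `ψ(d) = (1, b)`. -/
def d : Perm V := actD_invol.toPerm actD

@[simp] theorem coe_a : ⇑a = actA := rfl
@[simp] theorem coe_b : ⇑b = actB := rfl
@[simp] theorem coe_c : ⇑c = actC := rfl
@[simp] theorem coe_d : ⇑d = actD := rfl

/-- The twisted twin of the Grigorchuk group. -/
def G : Subgroup (Perm V) := Subgroup.closure {a, b, c, d}

theorem a_mem_G : a ∈ G := Subgroup.subset_closure (by simp)
theorem b_mem_G : b ∈ G := Subgroup.subset_closure (by simp)
theorem c_mem_G : c ∈ G := Subgroup.subset_closure (by simp)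
theorem d_mem_G : d ∈ G := Subgroup.subset_closure (by simp)

/-- `hasState g v s` says that the state (section) of `g` at the vertex `v` is `s`,
i.e. `g (v ++ w) = g v ++ s w` for all `w`. -/
def hasState (g : Perm V) (v : V) (s : Perm V) : Prop :=
  ∀ w : V, g (v ++ w) = g v ++ s w

def vstarFun (v : V) (f : V → V) : V → V :=
  fun w => if v <+: w then v ++ f (w.drop v.length) else w

theorem vstarFun_comp (v : V) (f f' : V → V) (w : V) :
    vstarFun v f (vstarFun v f' w) = vstarFun v (f ∘ f') w := by
  by_cases h : v <+: w
  · obtain ⟨t, rfl⟩ := h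
    simp [vstarFun, List.prefix_append, List.drop_left]
  · simp [vstarFun, h]

theorem vstarFun_id (v w : V) : vstarFun v id w = w := by
  by_cases h : v <+: w
  · obtain ⟨t, rfl⟩ := h
    simp [vstarFun, List.prefix_append, List.drop_left]
  · simp [vstarFun, h]

/-- `vstar v g` is the automorphism `v * g`, acting as `g` on the subtree rooted
at `v` and trivially elsewhere. -/
def vstar (v : V) (g : Perm V) : Perm V where
  toFun := vstarFun v g
  invFun := vstarFun v g.symm
  left_inv := fun w => by
    rw [vstarFun_comp, Equiv.symm_comp_self]
    exact vstarFun_id v w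
  right_inv := fun w => by
    rw [vstarFun_comp, Equiv.self_comp_symm]
    exact vstarFun_id v w

/-- `XstarSub n H` is the subgroup `Xⁿ * H`: the product of the copies `v * H`
over all vertices `v` of level `n` (equivalently, the subgroup they generate). -/
def XstarSub (n : ℕ) (H : Subgroup (Perm V)) : Subgroup (Perm V) :=
  Subgroup.closure {p | ∃ v : V, ∃ g : Perm V, v.length = n ∧ g ∈ H ∧ p = vstar v g}

/-- `pairPerm s₀ s₁ = ψ⁻¹(s₀, s₁)`: the first-level stabilizer element whose states
at the vertices `0` and `1` are `s₀` and `s₁`. -/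
def pairPerm (s₀ s₁ : Perm V) : Perm V := vstar [false] s₀ * vstar [true] s₁

/-- The permutations fixing every vertex of level `n`. -/
def stabLevel (n : ℕ) : Subgroup (Perm V) where
  carrier := {g : Perm V | ∀ v : V, v.length = n → g v = v}
  one_mem' := fun _ _ => rfl
  mul_mem' := by
    intro g h hg hh v hv
    show g (h v) = v
    rw [hh v hv, hg v hv]
  inv_mem' := by
    intro g hg v hv
    show g⁻¹ v = v
    conv_lhs => rw [← hg v hv]
    exact Equiv.symm_apply_apply g v

/-- The `n`-th level stabilizer `Stab_G(n)` of `G`. -/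
def stabG (n : ℕ) : Subgroup (Perm V) := G ⊓ stabLevel n

/-- The commutator `[x, y] = x⁻¹ y⁻¹ x y` (paper convention). -/
def pc (x y : Perm V) : Perm V := x⁻¹ * y⁻¹ * x * y
/-- Conjugation `xʸ = y⁻¹ x y`. -/
def cj (x y : Perm V) : Perm V := y⁻¹ * x * y

/-- The normal closure in `G` of a subset `S` of `G`. -/
def ncl (S : Set (Perm V)) : Subgroup (Perm V) :=
  Subgroup.closure {x | ∃ s ∈ S, ∃ g ∈ G, x = g⁻¹ * s * g}

/-- `K = ⟨[a,b],[b,c],[b,d],[c,d], bcd⟩^G`. -/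
def K : Subgroup (Perm V) := ncl {pc a b, pc b c, pc b d, pc c d, b * c * d}

/-- The subgroup `[K, G]`. -/
def KG : Subgroup (Perm V) := ⁅K, G⁆

/-- The subgroup `C`, generated by `[K,G]` and `[a,b][b,c]`. -/
def Csub : Subgroup (Perm V) := KG ⊔ Subgroup.closure {pc a b * pc b c}

/-- `γ_n(G)`, the `n`-th term of the lower central series of `G` (starting at `γ₁ = G`),
viewed as a subgroup of `Perm V`. -/
def gammaG (n : ℕ) : Subgroup (Perm V) :=
  Subgroup.map G.subtype (Subgroup.lowerCentralSeries (⊤ : Subgroup ↥G) (n - 1))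

/-! Two facts about states drive the argument. First, `K` is closed under `v * ·`: at the
vertex `1` the five normal generators of `K` become products of `G`-conjugates of those
generators, and conjugation by `G` inside a subtree is realized by `G` itself, since `G` is
self-replicating. Second, every `g ∈ G` is the state at a vertex `v` of level at least 4 of an
element `w ∈ K` fixing `v`; this descends along
`G → ⟨a, b, c, ad⟩^G → ⟨b, ad, ac⟩^G → ⟨ac, adad, abab⟩^G → K`, each group consisting of
first-level states of elements of the next. Then `v * [k, g] = [v * k, w] ∈ [K, K]`. -/

@[simp] theorem actA_actA (w : V) : actA (actA w) = w := actA_invol w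
@[simp] theorem actB_actB (w : V) : actB (actB w) = w := actB_invol w
@[simp] theorem actC_actC (w : V) : actC (actC w) = w := actC_invol w
@[simp] theorem actD_actD (w : V) : actD (actD w) = w := actD_invol w

@[simp] theorem actA_nil : actA [] = [] := rfl
@[simp] theorem actA_cons (x : Bool) (w : V) : actA (x :: w) = (!x) :: w := rfl
@[simp] theorem actB_nil : actB [] = [] := by rw [actB]
@[simp] theorem actB_false_cons (w : V) : actB (false :: w) = false :: actC w := by rw [actB]
@[simp] theorem actB_true_cons (w : V) : actB (true :: w) = true :: actA w := by rw [actB]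
@[simp] theorem actC_nil : actC [] = [] := by rw [actC]
@[simp] theorem actC_false_cons (w : V) : actC (false :: w) = false :: actA w := by rw [actC]
@[simp] theorem actC_true_cons (w : V) : actC (true :: w) = true :: actD w := by rw [actC]
@[simp] theorem actD_nil : actD [] = [] := by rw [actD]
@[simp] theorem actD_false_cons (w : V) : actD (false :: w) = false :: w := by rw [actD]
@[simp] theorem actD_true_cons (w : V) : actD (true :: w) = true :: actB w := by rw [actD]

@[simp] theorem a_inv : a⁻¹ = a := inv_eq_of_mul_eq_one_right (Equiv.ext actA_invol)
@[simp] theorem b_inv : b⁻¹ = b := inv_eq_of_mul_eq_one_right (Equiv.ext actB_invol)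
@[simp] theorem c_inv : c⁻¹ = c := inv_eq_of_mul_eq_one_right (Equiv.ext actC_invol)
@[simp] theorem d_inv : d⁻¹ = d := inv_eq_of_mul_eq_one_right (Equiv.ext actD_invol)

theorem vstar_apply (v : V) (g : Perm V) (w : V) :
    vstar v g w = if v <+: w then v ++ g (w.drop v.length) else w := rfl

@[simp] theorem vstar_singleton_apply_nil (x : Bool) (g : Perm V) : vstar [x] g [] = [] := by
  simp [vstar_apply]

@[simp] theorem vstar_singleton_apply_cons (x y : Bool) (g : Perm V) (t : V) :
    vstar [x] g (y :: t) = if y = x then y :: g t else y :: t := by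
  by_cases h : y = x
  · simp [vstar_apply, h]
  · simp [vstar_apply, h, Ne.symm h]

@[simp] theorem vstar_apply_append (v : V) (g : Perm V) (t : V) :
    vstar v g (v ++ t) = v ++ g t := by
  simp [vstar_apply]

theorem vstar_apply_of_not_prefix {v u : V} (g : Perm V) (h : ¬ v <+: u) : vstar v g u = u := by
  simp [vstar_apply, h]

theorem vstar_mul (v : V) (g h : Perm V) : vstar v (g * h) = vstar v g * vstar v h := by
  ext u : 1
  by_cases hu : v <+: u
  · obtain ⟨t, rfl⟩ := hu
    simp
  · simp [vstar_apply_of_not_prefix _ hu]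

def vstarHom (v : V) : Perm V →* Perm V := MonoidHom.mk' (vstar v) (vstar_mul v)

@[simp] theorem vstarHom_apply (v : V) (g : Perm V) : vstarHom v g = vstar v g := rfl

@[simp] theorem vstar_nil (g : Perm V) : vstar [] g = g := by
  ext u : 1
  simp [vstar_apply]

theorem vstar_cons (x : Bool) (v : V) (g : Perm V) :
    vstar (x :: v) g = vstar [x] (vstar v g) := by
  ext u : 1
  rcases u with _ | ⟨y, t⟩
  · simp [vstar_apply]
  · by_cases hyx : y = x
    · subst hyx
      by_cases hv : v <+: t
      · obtain ⟨s, rfl⟩ := hv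
        simp [vstar_apply]
      · simp [vstar_apply, hv]
    · simp [vstar_apply, Ne.symm hyx]

theorem vstar_false_eq_conj (g : Perm V) : vstar [false] g = a * vstar [true] g * a := by
  ext u : 1
  rcases u with _ | ⟨_ | _, t⟩ <;> simp

def FixesWithState (w : Perm V) (v : V) (g : Perm V) : Prop := ∀ t : V, w (v ++ t) = v ++ g t

namespace FixesWithState

variable {w w' h g g' : Perm V} {u v : V}

theorem one (v : V) : FixesWithState 1 v 1 := fun _ => rfl

theorem nil (g : Perm V) : FixesWithState g [] g := fun _ => rfl

theorem mul (hw : FixesWithState w v g) (hw' : FixesWithState w' v g') :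
    FixesWithState (w * w') v (g * g') := fun t => by
  simp only [Perm.mul_apply, hw' t, hw (g' t)]

theorem inv (hw : FixesWithState w v g) : FixesWithState w⁻¹ v g⁻¹ := fun t => by
  rw [Perm.inv_eq_iff_eq, hw, ← Perm.mul_apply, mul_inv_cancel, Perm.one_apply]

theorem append (hw : FixesWithState w u h) (hh : FixesWithState h v g) :
    FixesWithState w (u ++ v) g := fun t => by
  rw [List.append_assoc, hw, hh, List.append_assoc]

theorem conj_vstar (hw : FixesWithState w v g) (p : Perm V) :
    w⁻¹ * vstar v p * w = vstar v (g⁻¹ * p * g) := by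
  ext u : 1
  by_cases hu : v <+: u
  · obtain ⟨t, rfl⟩ := hu
    rw [Perm.mul_apply, Perm.mul_apply, hw t, vstar_apply_append, vstar_apply_append, hw.inv]
    rfl
  · have hwu : ¬ v <+: w u := by
      rintro ⟨s, hs⟩
      refine hu ⟨g⁻¹ s, ?_⟩
      rw [← hw.inv, hs, ← Perm.mul_apply, inv_mul_cancel, Perm.one_apply]
    simp [vstar_apply_of_not_prefix _ hu, vstar_apply_of_not_prefix _ hwu]

end FixesWithState

def statesAt (T : Subgroup (Perm V)) (v : V) : Subgroup (Perm V) where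
  carrier := {g | ∃ w ∈ T, FixesWithState w v g}
  one_mem' := ⟨1, T.one_mem, .one v⟩
  mul_mem' := fun ⟨w, hw, hf⟩ ⟨w', hw', hf'⟩ => ⟨w * w', T.mul_mem hw hw', hf.mul hf'⟩
  inv_mem' := fun ⟨w, hw, hf⟩ => ⟨w⁻¹, T.inv_mem hw, hf.inv⟩

theorem le_statesAt_append {T H L : Subgroup (Perm V)} {u v : V}
    (hH : H ≤ statesAt T u) (hL : L ≤ statesAt H v) : L ≤ statesAt T (u ++ v) := by
  intro g hg
  obtain ⟨h, hh, hfh⟩ := hL hg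
  obtain ⟨w, hw, hfw⟩ := hH hh
  exact ⟨w, hw, hfw.append hfh⟩

theorem G_le_statesAt_G_singleton (x : Bool) : G ≤ statesAt G [x] := by
  have hab : a * b * a ∈ G := mul_mem (mul_mem a_mem_G b_mem_G) a_mem_G
  have hac : a * c * a ∈ G := mul_mem (mul_mem a_mem_G c_mem_G) a_mem_G
  have had : a * d * a ∈ G := mul_mem (mul_mem a_mem_G d_mem_G) a_mem_G
  rw [G, Subgroup.closure_le]
  rintro s (rfl | rfl | rfl | rfl) <;> cases x
  · exact ⟨a * b * a, hab, fun t => by simp⟩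
  · exact ⟨b, b_mem_G, fun t => by simp⟩
  · exact ⟨a * d * a, had, fun t => by simp⟩
  · exact ⟨d, d_mem_G, fun t => by simp⟩
  · exact ⟨b, b_mem_G, fun t => by simp⟩
  · exact ⟨a * b * a, hab, fun t => by simp⟩
  · exact ⟨a * c * a, hac, fun t => by simp⟩
  · exact ⟨c, c_mem_G, fun t => by simp⟩

theorem G_le_statesAt_G (v : V) : G ≤ statesAt G v := by
  induction v with
  | nil => exact fun g hg => ⟨g, hg, .nil g⟩
  | cons x v ih => exact le_statesAt_append (G_le_statesAt_G_singleton x) ih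

theorem subset_ncl (S : Set (Perm V)) : S ⊆ ncl S :=
  fun s hs => Subgroup.subset_closure ⟨s, hs, 1, one_mem G, by simp⟩

theorem conj_mem_ncl {S : Set (Perm V)} {k g : Perm V} (hk : k ∈ ncl S) (hg : g ∈ G) :
    g⁻¹ * k * g ∈ ncl S := by
  induction hk using Subgroup.closure_induction with
  | mem x hx =>
    obtain ⟨s, hs, h, hh, rfl⟩ := hx
    exact Subgroup.subset_closure ⟨s, hs, h * g, mul_mem hh hg, by group⟩
  | one => simp
  | mul x y _ _ hx hy => simpa [mul_assoc] using mul_mem hx hy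
  | inv x _ hx => simpa [mul_assoc] using inv_mem hx

theorem ncl_le_statesAt_ncl {S S' : Set (Perm V)} {v : V} (h : S ⊆ statesAt (ncl S') v) :
    ncl S ≤ statesAt (ncl S') v := by
  rw [ncl, Subgroup.closure_le]
  rintro _ ⟨s, hs, g, hg, rfl⟩
  obtain ⟨w, hw, hfw⟩ := h hs
  obtain ⟨z, hz, hfz⟩ := G_le_statesAt_G v hg
  exact ⟨z⁻¹ * w * z, conj_mem_ncl hw hz, (hfz.inv.mul hfw).mul hfz⟩

theorem ncl_le_comap_vstarHom {S S' : Set (Perm V)} {v : V}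
    (h : ∀ s ∈ S, vstar v s ∈ ncl S') :
    ncl S ≤ (ncl S').comap (vstarHom v) := by
  rw [ncl, Subgroup.closure_le]
  rintro _ ⟨s, hs, g, hg, rfl⟩
  obtain ⟨z, hz, hfz⟩ := G_le_statesAt_G v hg
  simpa [← hfz.conj_vstar] using conj_mem_ncl (h s hs) hz

theorem mem_statesAt_ncl_singleton {S : Set (Perm V)} {g : Perm V}
    (h : g ∈ statesAt (ncl S) [true]) (x : Bool) : g ∈ statesAt (ncl S) [x] := by
  obtain ⟨w, hw, hfw⟩ := h
  cases x
  · refine ⟨a⁻¹ * w * a, conj_mem_ncl hw a_mem_G, fun t => ?_⟩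
    have hwt : w (true :: t) = true :: g t := hfw t
    simp [hwt]
  · exact ⟨w, hw, hfw⟩

def H₁ : Subgroup (Perm V) := ncl {a * c, a * d * a * d, a * b * a * b}
def H₂ : Subgroup (Perm V) := ncl {b, a * d, a * c}
def H₃ : Subgroup (Perm V) := ncl {a, b, c, a * d}

theorem G_le_statesAt_H₃ (x : Bool) : G ≤ statesAt H₃ [x] := by
  have hb : b ∈ H₃ := subset_ncl _ (by simp)
  have hc : c ∈ H₃ := subset_ncl _ (by simp)
  have had : a * d ∈ H₃ := subset_ncl _ (by simp)
  rw [G, Subgroup.closure_le]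
  rintro s hs
  refine mem_statesAt_ncl_singleton ?_ x
  rcases hs with rfl | rfl | rfl | rfl
  · exact ⟨b, hb, fun t => by simp⟩
  · exact ⟨a * d * (a * d), mul_mem had had, fun t => by simp⟩
  · exact ⟨a⁻¹ * b * a, conj_mem_ncl hb a_mem_G, fun t => by simp⟩
  · exact ⟨c, hc, fun t => by simp⟩

theorem H₃_le_statesAt_H₂ (x : Bool) : H₃ ≤ statesAt H₂ [x] := by
  have hb : b ∈ H₂ := subset_ncl _ (by simp)
  have had : a * d ∈ H₂ := subset_ncl _ (by simp)
  have hac : a * c ∈ H₂ := subset_ncl _ (by simp)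
  refine ncl_le_statesAt_ncl fun s hs => mem_statesAt_ncl_singleton ?_ x
  rcases hs with rfl | rfl | rfl | rfl
  · exact ⟨b, hb, fun t => by simp⟩
  · exact ⟨a * d * (a * d), mul_mem had had, fun t => by simp⟩
  · exact ⟨a⁻¹ * b * a, conj_mem_ncl hb a_mem_G, fun t => by simp⟩
  · exact ⟨a * c * (a * c), mul_mem hac hac, fun t => by simp⟩

theorem H₂_le_statesAt_H₁ (x : Bool) : H₂ ≤ statesAt H₁ [x] := by
  have hac : a * c ∈ H₁ := subset_ncl _ (by simp)
  have hadad : a * d * a * d ∈ H₁ := subset_ncl _ (by simp)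
  have habab : a * b * a * b ∈ H₁ := subset_ncl _ (by simp)
  refine ncl_le_statesAt_ncl fun s hs => mem_statesAt_ncl_singleton ?_ x
  rcases hs with rfl | rfl | rfl
  · exact ⟨a * d * a * d, hadad, fun t => by simp⟩
  · exact ⟨a * c * (a * c), mul_mem hac hac, fun t => by simp⟩
  · exact ⟨a⁻¹ * (a * b * a * b) * a, conj_mem_ncl habab a_mem_G, fun t => by simp⟩

theorem H₁_le_statesAt_K (x : Bool) : H₁ ≤ statesAt K [x] := by
  have hab : pc a b ∈ K := subset_ncl _ (by simp)
  have hbc : pc b c ∈ K := subset_ncl _ (by simp)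
  have hbd : pc b d ∈ K := subset_ncl _ (by simp)
  refine ncl_le_statesAt_ncl fun s hs => mem_statesAt_ncl_singleton ?_ x
  rcases hs with rfl | rfl | rfl
  · exact ⟨a⁻¹ * pc a b * a, conj_mem_ncl hab a_mem_G, fun t => by simp [pc]⟩
  · exact ⟨pc b c, hbc, fun t => by simp [pc]⟩
  · exact ⟨pc b d, hbd, fun t => by simp [pc]⟩

theorem G_le_statesAt_K {v : V} (hv : 4 ≤ v.length) : G ≤ statesAt K v := by
  rcases v with _ | ⟨x₁, _ | ⟨x₂, _ | ⟨x₃, _ | ⟨x₄, rest⟩⟩⟩⟩ <;> simp at hv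
  exact le_statesAt_append (H₁_le_statesAt_K x₁) <|
    le_statesAt_append (H₂_le_statesAt_H₁ x₂) <|
    le_statesAt_append (H₃_le_statesAt_H₂ x₃) <|
    le_statesAt_append (G_le_statesAt_H₃ x₄) (G_le_statesAt_G rest)

theorem vstar_true_pc_a_b : vstar [true] (pc a b) = pc b d := by
  ext u : 1
  rcases u with _ | ⟨_ | _, t⟩ <;> simp [pc]

theorem vstar_true_pc_b_c :
    vstar [true] (pc b c) = d⁻¹ * pc a b * d * (pc b d)⁻¹ * (pc a b)⁻¹ := by
  ext u : 1
  rcases u with _ | ⟨_ | _, t⟩ <;> simp [pc]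

theorem vstar_true_pc_b_d : vstar [true] (pc b d) = (pc c d)⁻¹ := by
  ext u : 1
  rcases u with _ | ⟨_ | _, t⟩ <;> simp [pc]

theorem vstar_true_pc_c_d : vstar [true] (pc c d) =
    (a * b * a)⁻¹ * pc b c * (a * b * a) * (c⁻¹ * pc a b * c) * (pc a b)⁻¹ := by
  ext u : 1
  rcases u with _ | ⟨_ | _, _ | ⟨_ | _, t⟩⟩ <;> simp [pc]

theorem vstar_true_b_mul_c_mul_d :
    vstar [true] (b * c * d) = d⁻¹ * pc a b * d * (d⁻¹ * (b * c * d) * d) := by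
  ext u : 1
  rcases u with _ | ⟨_ | _, t⟩ <;> simp [pc]

theorem vstar_singleton_mem_K {s : Perm V}
    (hs : s ∈ ({pc a b, pc b c, pc b d, pc c d, b * c * d} : Set (Perm V))) (x : Bool) :
    vstar [x] s ∈ K := by
  have hab : pc a b ∈ K := subset_ncl _ (by simp)
  have hbc : pc b c ∈ K := subset_ncl _ (by simp)
  have hbd : pc b d ∈ K := subset_ncl _ (by simp)
  have hcd : pc c d ∈ K := subset_ncl _ (by simp)
  have hbcd : b * c * d ∈ K := subset_ncl _ (by simp)
  have htrue : vstar [true] s ∈ K := by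
    rcases hs with rfl | rfl | rfl | rfl | rfl
    · rw [vstar_true_pc_a_b]; exact hbd
    · rw [vstar_true_pc_b_c]
      exact mul_mem (mul_mem (conj_mem_ncl hab d_mem_G) (inv_mem hbd)) (inv_mem hab)
    · rw [vstar_true_pc_b_d]; exact inv_mem hcd
    · rw [vstar_true_pc_c_d]
      exact mul_mem (mul_mem (conj_mem_ncl hbc (mul_mem (mul_mem a_mem_G b_mem_G) a_mem_G))
        (conj_mem_ncl hab c_mem_G)) (inv_mem hab)
    · rw [vstar_true_b_mul_c_mul_d]
      exact mul_mem (conj_mem_ncl hab d_mem_G) (conj_mem_ncl hbcd d_mem_G)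
  cases x
  · have hfalse := conj_mem_ncl htrue a_mem_G
    rw [a_inv, ← vstar_false_eq_conj] at hfalse
    exact hfalse
  · exact htrue

theorem vstar_mem_K (v : V) {k : Perm V} (hk : k ∈ K) : vstar v k ∈ K := by
  induction v with
  | nil => simpa using hk
  | cons x v ih =>
    rw [vstar_cons]
    exact ncl_le_comap_vstarHom (fun s hs => vstar_singleton_mem_K hs x) ih

open scoped commutatorElement in
theorem KG_le_comap_vstarHom {v : V} (hv : 4 ≤ v.length) :
    KG ≤ (⁅K, K⁆).comap (vstarHom v) := by
  rw [KG, Subgroup.commutator_le]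
  intro k hk g hg
  obtain ⟨w, hw, hfw⟩ := G_le_statesAt_K hv hg
  have hconj : vstarHom v (g * k⁻¹ * g⁻¹) = w * (vstarHom v k)⁻¹ * w⁻¹ := by
    rw [← map_inv, vstarHom_apply, vstarHom_apply]
    simpa using (hfw.inv.conj_vstar k⁻¹).symm
  have hcomm : vstarHom v ⁅k, g⁆ = ⁅vstarHom v k, w⁆ := by
    rw [commutatorElement_def, commutatorElement_def, mul_assoc (k * g), mul_assoc k,
      ← mul_assoc g, map_mul, hconj]
    group
  rw [Subgroup.mem_comap, hcomm]
  exact Subgroup.commutator_mem_commutator (vstar_mem_K v hk) hw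

/-- **Lemma.** `K' = [K,K]` contains `Xⁿ*[K,G]` for all `n ≥ 5`. -/
theorem stmt11 : ∀ n : ℕ, 5 ≤ n → XstarSub n KG ≤ ⁅K, K⁆ := by
  intro n hn
  rw [XstarSub, Subgroup.closure_le]
  rintro _ ⟨v, g, rfl, hg, rfl⟩
  exact KG_le_comap_vstarHom (by omega) hg
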